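/- Let a and b be coprime positive integers, let p be a prime number with p ∤ b, and write a = p^r·a' with p ∤ a'. Let Δ(t) = (1 − t)(1 − t^{ab}) / ((1 − t^a)(1 − t^b)) = ∏_{m | ab, m ∤ a, m ∤ b} Φ_m(t), the Alexander polynomial of the (a,b)-torus knot, which lies in ℤ[t]. Then for every n ≥ 0, |Res(t^{p^n} − 1, Δ(t))| = b^{p^{min(n,r)} − 1}. In particular, the sequence (|Res(t^{p^n} − 1, Δ(t))|)_n converges to b^{p^r − 1} in ℤ_p. -/

import Mathlib

open Filter Topology Polynomial

/-- The `n`-th cyclic resultant of `f ∈ ℤ[t]`, computed in `ℂ` as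
`Res(t^n − 1, f(t)) = ∏_{ζ^n = 1} f(ζ)`, the product over all complex `n`-th roots of unity. -/
noncomputable def cyclicResultantC (n : ℕ) (f : Polynomial ℤ) : ℂ :=
  ((Polynomial.nthRoots n (1 : ℂ)).map (fun ζ => Polynomial.aeval ζ f)).prod

/-- The Alexander polynomial of the `(a,b)`-torus knot:
`Δ(t) = (1 − t)(1 − t^{ab}) / ((1 − t^a)(1 − t^b)) = ∏_{m ∣ ab, m ∤ a, m ∤ b} Φ_m(t) ∈ ℤ[t]`. -/
noncomputable def torusKnotAlexander (a b : ℕ) : Polynomial ℤ :=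
  ∏ m ∈ (Nat.divisors (a * b)).filter (fun m => ¬ m ∣ a ∧ ¬ m ∣ b),
    Polynomial.cyclotomic m ℤ

/-!
Since `Δ(t) · (1 + t + ⋯ + t^{b-1}) = 1 + t^a + ⋯ + t^{a(b-1)}` and cyclic resultants are
multiplicative, it suffices to compute `∏_{ζ^N = 1} ∑_{j<b} ζ^{cj}` for `N = p^n` coprime to `b`.
The `gcd(c, N)` roots with `ζ^c = 1` each contribute `b`; the other factors are
`(ζ^{cb} - 1)/(ζ^c - 1)`, whose product is `1` because `ζ ↦ ζ^b` permutes them.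
Finally `gcd(a, p^n) = p^{min(n, r)}`.
-/

open Finset

theorem Polynomial.prod_cyclotomic_divisors_mul_filter_not_dvd {a n : ℕ} (ha : 0 < a)
    (hn : 0 < n) (R : Type*) [CommRing R] :
    ∏ m ∈ (a * n).divisors with ¬ m ∣ a, cyclotomic m R = ∑ j ∈ range n, (X ^ a) ^ j := by
  have hdvd : {m ∈ (a * n).divisors | m ∣ a} = a.divisors := by
    ext m
    simp only [mem_filter, Nat.mem_divisors]
    exact ⟨fun h => ⟨h.2, ha.ne'⟩, fun h => ⟨⟨h.1.mul_right n, (mul_pos ha hn).ne'⟩, h.1⟩⟩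
  apply (monic_X_pow_sub_C (1 : R) ha.ne').isRegular.left
  rw [map_one]
  calc (X ^ a - 1) * ∏ m ∈ (a * n).divisors with ¬ m ∣ a, cyclotomic m R
      = (∏ m ∈ a.divisors, cyclotomic m R) * ∏ m ∈ (a * n).divisors with ¬ m ∣ a, cyclotomic m R :=
        by rw [prod_cyclotomic_eq_X_pow_sub_one ha]
    _ = X ^ (a * n) - 1 := by
        rw [← hdvd, prod_filter_mul_prod_filter_not, prod_cyclotomic_eq_X_pow_sub_one (mul_pos ha hn)]
    _ = (X ^ a - 1) * ∑ j ∈ range n, (X ^ a) ^ j := by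
        rw [mul_comm (X ^ a - 1), geom_sum_mul, ← pow_mul]

theorem torusKnotAlexander_mul_geom_sum {a b : ℕ} (ha : 0 < a) (hb : 0 < b)
    (hab : a.Coprime b) :
    torusKnotAlexander a b * ∑ i ∈ range b, X ^ i = ∑ j ∈ range b, (X ^ a) ^ j := by
  have hsplit : {m ∈ (a * b).divisors | ¬ m ∣ a ∧ m ∣ b} = b.divisors.erase 1 := by
    ext m
    simp only [mem_filter, mem_erase, Nat.mem_divisors]
    constructor
    · rintro ⟨-, hma, hmb⟩
      exact ⟨fun h => hma (h ▸ one_dvd a), hmb, hb.ne'⟩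
    · rintro ⟨hm1, hmb, -⟩
      refine ⟨⟨hmb.mul_left a, (mul_pos ha hb).ne'⟩, fun hma => hm1 ?_, hmb⟩
      exact Nat.eq_one_of_dvd_one (hab ▸ Nat.dvd_gcd hma hmb)
  rw [← prod_cyclotomic_divisors_mul_filter_not_dvd ha hb,
    ← prod_filter_mul_prod_filter_not {m ∈ (a * b).divisors | ¬ m ∣ a} (· ∣ b), filter_filter,
    filter_filter, hsplit, prod_cyclotomic_eq_geom_sum hb, torusKnotAlexander, mul_comm]

theorem cyclicResultantC_mul (N : ℕ) (f g : ℤ[X]) :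
    cyclicResultantC N (f * g) = cyclicResultantC N f * cyclicResultantC N g := by
  simp only [cyclicResultantC, map_mul, Multiset.prod_map_mul]

theorem cyclicResultantC_eq_prod {N : ℕ} (hN : 0 < N) (f : ℤ[X]) :
    cyclicResultantC N f = ∏ ζ ∈ nthRootsFinset N (1 : ℂ), aeval ζ f := by
  classical
  rw [cyclicResultantC, prod_eq_multiset_prod, nthRootsFinset_def, Multiset.toFinset_val,
    Multiset.dedup_eq_self.mpr (Complex.isPrimitiveRoot_exp N hN.ne').nthRoots_one_nodup]

section RootsOfUnity

variable {K : Type*} [Field K]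

theorem pow_injOn_of_coprime {N b : ℕ} (hN : 0 < N) (hbN : b.Coprime N) :
    Set.InjOn (· ^ b) {ζ : K | ζ ^ N = 1} := by
  intro ζ (hζ : ζ ^ N = 1) η (hη : η ^ N = 1) (hb : ζ ^ b = η ^ b)
  have hη0 : η ≠ 0 := by
    rintro rfl
    exact zero_ne_one ((zero_pow hN.ne').symm.trans hη)
  rw [← div_eq_one_iff_eq hη0, ← pow_eq_one_iff_of_coprime hbN, div_pow, div_pow, hb, hζ, hη,
    div_self (pow_ne_zero _ hη0), div_one]
  exact ⟨rfl, rfl⟩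

variable [DecidableEq K]

theorem filter_pow_eq_one_nthRootsFinset {N : ℕ} (hN : 0 < N) (c : ℕ) :
    {ζ ∈ nthRootsFinset N (1 : K) | ζ ^ c = 1} = nthRootsFinset (c.gcd N) 1 := by
  ext ζ
  rw [mem_filter, mem_nthRootsFinset hN, mem_nthRootsFinset (Nat.gcd_pos_of_pos_right c hN),
    pow_gcd_eq_one, and_comm]

theorem prod_comp_pow_of_coprime {M : Type*} [CommMonoid M] {N b : ℕ} (hN : 0 < N)
    (hbN : b.Coprime N) {S : Finset K} (hSN : ∀ ζ ∈ S, ζ ^ N = 1)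
    (hSb : ∀ ζ ∈ S, ζ ^ b ∈ S) (f : K → M) :
    ∏ ζ ∈ S, f (ζ ^ b) = ∏ ζ ∈ S, f ζ := by
  have hinj : Set.InjOn (· ^ b) (S : Set K) := (pow_injOn_of_coprime hN hbN).mono hSN
  have himage : S.image (· ^ b) = S :=
    eq_of_subset_of_card_le (image_subset_iff.2 hSb) (card_image_of_injOn hinj).ge
  rw [← prod_image hinj, himage]

theorem prod_geom_sum_pow_filter_pow_ne_one {N b c : ℕ} (hN : 0 < N) (hbN : b.Coprime N) :
    ∏ ζ ∈ nthRootsFinset N (1 : K) with ¬ ζ ^ c = 1, ∑ j ∈ range b, (ζ ^ c) ^ j = 1 := by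
  set T := {ζ ∈ nthRootsFinset N (1 : K) | ¬ ζ ^ c = 1}
  have hT : ∀ ζ ∈ T, ζ ^ N = 1 ∧ ¬ ζ ^ c = 1 := fun ζ hζ => by
    rwa [mem_filter, mem_nthRootsFinset hN] at hζ
  have hTb : ∀ ζ ∈ T, ζ ^ b ∈ T := by
    intro ζ hζ
    obtain ⟨hζN, hζc⟩ := hT ζ hζ
    refine mem_filter.2 ⟨(mem_nthRootsFinset hN _).2 ?_, fun h => hζc ?_⟩
    · rw [pow_right_comm, hζN, one_pow]
    · refine (pow_eq_one_iff_of_coprime hbN).1 ⟨?_, ?_⟩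
      · rwa [pow_right_comm] at h
      · rw [pow_right_comm, hζN, one_pow]
  have hperm : ∏ ζ ∈ T, ((ζ ^ b) ^ c - 1) = ∏ ζ ∈ T, (ζ ^ c - 1) :=
    prod_comp_pow_of_coprime hN hbN (fun ζ hζ => (hT ζ hζ).1) hTb (fun ζ => ζ ^ c - 1)
  have hne : ∏ ζ ∈ T, (ζ ^ c - 1) ≠ 0 :=
    prod_ne_zero_iff.2 fun ζ hζ => sub_ne_zero.2 (hT ζ hζ).2
  apply mul_right_cancel₀ hne
  rw [one_mul, ← prod_mul_distrib, ← hperm]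
  exact prod_congr rfl fun ζ _ => by rw [geom_sum_mul, pow_right_comm]

end RootsOfUnity

theorem prod_nthRootsFinset_geom_sum_pow {N b : ℕ} (c : ℕ) (hN : 0 < N) (hbN : b.Coprime N) :
    ∏ ζ ∈ nthRootsFinset N (1 : ℂ), ∑ j ∈ range b, (ζ ^ c) ^ j = (b : ℂ) ^ c.gcd N := by
  classical
  have htriv : ∏ ζ ∈ nthRootsFinset N (1 : ℂ) with ζ ^ c = 1, ∑ j ∈ range b, (ζ ^ c) ^ j
      = (b : ℂ) ^ c.gcd N := by
    rw [prod_congr rfl fun ζ hζ => by rw [(mem_filter.1 hζ).2], prod_const,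
      filter_pow_eq_one_nthRootsFinset hN,
      (Complex.isPrimitiveRoot_exp _ (Nat.gcd_pos_of_pos_right c hN).ne').card_nthRootsFinset]
    simp
  rw [← prod_filter_mul_prod_filter_not _ (fun ζ => ζ ^ c = 1), htriv,
    prod_geom_sum_pow_filter_pow_ne_one hN hbN, mul_one]

theorem cyclicResultantC_geom_sum_X_pow {N b : ℕ} (c : ℕ) (hN : 0 < N) (hbN : b.Coprime N) :
    cyclicResultantC N (∑ j ∈ range b, (X ^ c) ^ j) = (b : ℂ) ^ c.gcd N := by
  rw [cyclicResultantC_eq_prod hN]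
  simp only [map_sum, map_pow, aeval_X]
  exact prod_nthRootsFinset_geom_sum_pow c hN hbN

theorem cyclicResultantC_torusKnotAlexander {a b N : ℕ} (ha : 0 < a) (hb : 0 < b)
    (hab : a.Coprime b) (hN : 0 < N) (hbN : b.Coprime N) :
    cyclicResultantC N (torusKnotAlexander a b) = (b : ℂ) ^ (a.gcd N - 1) := by
  have h := congrArg (cyclicResultantC N) (torusKnotAlexander_mul_geom_sum ha hb hab)
  have hgeom : cyclicResultantC N (∑ i ∈ range b, X ^ i) = b := by
    simpa using cyclicResultantC_geom_sum_X_pow 1 hN hbN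
  rw [cyclicResultantC_mul, hgeom, cyclicResultantC_geom_sum_X_pow a hN hbN,
    ← Nat.sub_add_cancel (Nat.gcd_pos_of_pos_left N ha), pow_succ] at h
  exact mul_right_cancel₀ (Nat.cast_ne_zero.2 hb.ne') h

theorem Nat.Prime.gcd_pow_mul_pow {p : ℕ} (hp : p.Prime) {a' : ℕ} (hpa' : ¬ p ∣ a') (r n : ℕ) :
    (p ^ r * a').gcd (p ^ n) = p ^ min n r := by
  rw [Nat.Coprime.gcd_mul_right_cancel _ ((hp.coprime_iff_not_dvd.2 hpa').pow_left n).symm]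
  rcases le_total r n with hrn | hnr
  · rw [Nat.gcd_eq_left (pow_dvd_pow p hrn), min_eq_right hrn]
  · rw [Nat.gcd_eq_right (pow_dvd_pow p hnr), min_eq_left hnr]

/-- For coprime positive `a, b`, a prime `p ∤ b` with `a = p^r·a'`, `p ∤ a'`,
and `Δ` the Alexander polynomial of the torus knot `T_{a,b}`, we have
`|Res(t^{p^n} − 1, Δ)| = b^{p^{min(n,r)} − 1}` for all `n`, so these values converge to
`b^{p^r − 1}` in `ℤ_p`. -/
theorem torus_knot_cyclic_resultants
    (a b : ℕ) (ha : 0 < a) (hb : 0 < b) (hab : Nat.Coprime a b)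
    (p : ℕ) [hp : Fact p.Prime] (hpb : ¬ p ∣ b)
    (r a' : ℕ) (haa' : a = p ^ r * a') (hpa' : ¬ p ∣ a')
    (R : ℕ → ℤ)
    (hR : ∀ n, ((R n : ℤ) : ℂ) = cyclicResultantC (p ^ n) (torusKnotAlexander a b)) :
    (∀ n, (R n).natAbs = b ^ (p ^ min n r - 1)) ∧
    Tendsto (fun n => (((R n).natAbs : ℤ_[p]))) atTop (𝓝 ((b : ℤ_[p]) ^ (p ^ r - 1))) := by
  have hR_eq : ∀ n, R n = (b : ℤ) ^ (p ^ min n r - 1) := by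
    intro n
    have hbN : b.Coprime (p ^ n) := ((hp.out.coprime_iff_not_dvd.2 hpb).pow_left n).symm
    have h := hR n
    rw [cyclicResultantC_torusKnotAlexander ha hb hab (pow_pos hp.out.pos n) hbN, haa',
      hp.out.gcd_pow_mul_pow hpa'] at h
    exact_mod_cast h
  have habs : ∀ n, (R n).natAbs = b ^ (p ^ min n r - 1) := fun n => by
    rw [hR_eq n, Int.natAbs_pow, Int.natAbs_natCast]
  refine ⟨habs, tendsto_const_nhds.congr' ?_⟩
  filter_upwards [eventually_ge_atTop r] with n hn
  rw [habs n, min_eq_right hn]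
  push_cast
  rfl
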